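/- There are no integers a, b₁, …, b₆ satisfying both b₁ + ⋯ + b₆ = 3a − 2 and b₁² + ⋯ + b₆² = a² − 1. -/
import Mathlib

/-- There are no integers `a, b₁, …, b₆` with `b₁+⋯+b₆ = 3a−2` and
`b₁²+⋯+b₆² = a²−1`. -/
theorem no_solution_case_CD12 :
    ¬ ∃ a b₁ b₂ b₃ b₄ b₅ b₆ : ℤ,
      b₁ + b₂ + b₃ + b₄ + b₅ + b₆ = 3 * a - 2 ∧
      b₁ ^ 2 + b₂ ^ 2 + b₃ ^ 2 + b₄ ^ 2 + b₅ ^ 2 + b₆ ^ 2 = a ^ 2 - 1 := by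
  rintro ⟨a, b₁, b₂, b₃, b₄, b₅, b₆, h1, h2⟩
  have key : ∀ x : ℤ, ∃ k : ℤ, x ^ 2 - x = 2 * k := by
    intro x
    rcases Int.even_or_odd x with ⟨k, hk⟩ | ⟨k, hk⟩
    · exact ⟨2 * k ^ 2 - k, by subst hk; ring⟩
    · exact ⟨2 * k ^ 2 + k, by subst hk; ring⟩
  obtain ⟨k₁, e₁⟩ := key b₁
  obtain ⟨k₂, e₂⟩ := key b₂
  obtain ⟨k₃, e₃⟩ := key b₃
  obtain ⟨k₄, e₄⟩ := key b₄
  obtain ⟨k₅, e₅⟩ := key b₅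
  obtain ⟨k₆, e₆⟩ := key b₆
  obtain ⟨ka, ea⟩ := key a
  have : (a ^ 2 - 1) - (3 * a - 2) = (a ^ 2 - a) - 2 * a + 1 := by ring
  omega
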